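/- Let N ≥ 4 be an integer and Δx, Δt > 0. Let u, U : ℤ → ℝ each satisfy the numerical boundary conditions f(0) = 0, f(−1) = f(1), f(N+1) = f(N−1), f(N+2) = 2 f(N) − f(N−2), and set ū = (u + U)/2 and w = (U − u)/Δt. Suppose that for every n with 1 ≤ n ≤ N the scheme equation δ̃_x² w(n) = −(δ̃_x² ū(n)) (δ_x ū(n)) − δ_x ( ū · δ̃_x² ū )(n) holds, where (ū · δ̃_x² ū)(m) := ū(m) δ̃_x² ū(m). Then H_{1,d}(U) = H_{1,d}(u), where H_{1,d}(f) = Σ''_{n=0}^N (Δx/2) · ( (δ_x^+ f(n))² + (δ_x^- f(n))² ) / 2. -/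

import Mathlib

/-- Forward difference `δ_x^+ f(n) = (f(n+1) − f(n))/Δx`. -/
noncomputable def dxp (Δx : ℝ) (f : ℤ → ℝ) (n : ℤ) : ℝ := (f (n + 1) - f n) / Δx

/-- Backward difference `δ_x^- f(n) = (f(n) − f(n−1))/Δx`. -/
noncomputable def dxm (Δx : ℝ) (f : ℤ → ℝ) (n : ℤ) : ℝ := (f n - f (n - 1)) / Δx

/-- Centered difference `δ_x = (δ_x^+ + δ_x^-)/2`. -/
noncomputable def dxc (Δx : ℝ) (f : ℤ → ℝ) (n : ℤ) : ℝ := (dxp Δx f n + dxm Δx f n) / 2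

/-- Second central difference `δ̃_x² f(n) = (f(n+1) − 2f(n) + f(n−1))/Δx²`. -/
noncomputable def d2x (Δx : ℝ) (f : ℤ → ℝ) (n : ℤ) : ℝ :=
  (f (n + 1) - 2 * f n + f (n - 1)) / Δx ^ 2

/-- Trapezoidal sum `Σ''_{n=0}^N g(n) = g(0)/2 + Σ_{n=1}^{N−1} g(n) + g(N)/2`. -/
noncomputable def trapSum (N : ℤ) (g : ℤ → ℝ) : ℝ :=
  g 0 / 2 + (∑ n ∈ Finset.Ico (1 : ℤ) N, g n) + g N / 2

/-- The discrete Hamiltonian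
`H_{1,d}(f) = Σ''_{n=0}^N (Δx/2)·((δ_x^+ f(n))² + (δ_x^- f(n))²)/2`. -/
noncomputable def H1d (Δx : ℝ) (N : ℤ) (f : ℤ → ℝ) : ℝ :=
  trapSum N (fun n => (Δx / 2) * ((dxp Δx f n) ^ 2 + (dxm Δx f n) ^ 2) / 2)

/-!
Put `v = (u + U)/2` and `w = (U - u)/Δt`. Under the reflecting boundary conditions the
trapezoidal energy is `(Δx/2) Σ_{0 ≤ n < N} (δ_x^+ f(n))²`, so `H(U) - H(u) = Δx Δt Σ δ_x^+ v δ_x^+ w`,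
which summation by parts turns into `-Δx Δt Σ'' v δ̃_x² w`. By the scheme and the discrete product
rule `f δ_x g + g δ_x f = δ_x^- ⟨f, g⟩`, where `⟨f, g⟩(m) = (f(m) g(m+1) + g(m) f(m+1))/2`, the
summand is the backward difference `-δ_x^- ⟨v, v δ̃_x² v⟩`, whose trapezoidal sum only sees the
boundary values of `⟨v, v δ̃_x² v⟩`; these vanish at `0` since `v(0) = 0`, and cancel at `N` by the
conditions at the right end.
-/

lemma sum_Ico_sub_pred (F : ℤ → ℝ) {a b : ℤ} (hab : a ≤ b) :
    ∑ n ∈ Finset.Ico a b, (F n - F (n - 1)) = F (b - 1) - F (a - 1) := by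
  induction b, hab using Int.leInduction with
  | base => simp
  | succ b hab ih =>
    rw [← Finset.insert_Ico_right_eq_Ico_add_one hab,
      Finset.sum_insert Finset.right_notMem_Ico, ih, add_sub_cancel_right]
    ring

lemma sum_Ico_eq_add_sum_Ico_add_one (f : ℤ → ℝ) {a b : ℤ} (hab : a < b) :
    ∑ n ∈ Finset.Ico a b, f n = f a + ∑ n ∈ Finset.Ico (a + 1) b, f n := by
  rw [← Finset.insert_Ico_add_one_left_eq_Ico hab, Finset.sum_insert (by simp)]

section DifferenceCalculus

variable (Δx : ℝ)

lemma sum_Ico_dxm (G : ℤ → ℝ) {a b : ℤ} (hab : a ≤ b) :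
    ∑ n ∈ Finset.Ico a b, dxm Δx G n = (G (b - 1) - G (a - 1)) / Δx := by
  rw [← sum_Ico_sub_pred G hab, Finset.sum_div]
  rfl

lemma dxm_eq_dxp_sub_one (f : ℤ → ℝ) (n : ℤ) : dxm Δx f n = dxp Δx f (n - 1) := by
  simp only [dxm, dxp, sub_add_cancel]

lemma dxp_mul_dxp_add_mul_d2x (v w : ℤ → ℝ) (n : ℤ) :
    dxp Δx v n * dxp Δx w n + v n * d2x Δx w n
      = dxm Δx (fun m => v (m + 1) * dxp Δx w m) n := by
  simp only [dxp, dxm, d2x, sub_add_cancel]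
  ring

noncomputable def crossAvg (f g : ℤ → ℝ) (m : ℤ) : ℝ := (f m * g (m + 1) + g m * f (m + 1)) / 2

lemma mul_dxc_add_mul_dxc (f g : ℤ → ℝ) (n : ℤ) :
    f n * dxc Δx g n + g n * dxc Δx f n = dxm Δx (crossAvg f g) n := by
  simp only [crossAvg, dxc, dxp, dxm, sub_add_cancel]
  ring

lemma mul_d2x_eq_neg_dxm_crossAvg {v w : ℤ → ℝ} {n : ℤ}
    (h : d2x Δx w n = -(d2x Δx v n) * dxc Δx v n - dxc Δx (fun m => v m * d2x Δx v m) n) :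
    v n * d2x Δx w n = -dxm Δx (crossAvg v fun m => v m * d2x Δx v m) n := by
  rw [h, ← mul_dxc_add_mul_dxc]
  ring

lemma crossAvg_add_crossAvg_sub_one_eq_zero {v : ℤ → ℝ} {N : ℤ} (h₁ : v (N + 1) = v (N - 1))
    (h₂ : v (N + 2) = 2 * v N - v (N - 2)) :
    crossAvg v (fun m => v m * d2x Δx v m) N + crossAvg v (fun m => v m * d2x Δx v m) (N - 1)
      = 0 := by
  simp only [crossAvg, d2x, sub_add_cancel, add_sub_cancel_right, show N + 1 + 1 = N + 2 by omega,
    show N - 1 - 1 = N - 2 by omega, h₁, h₂]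
  ring

end DifferenceCalculus

section TrapezoidalSum

variable {N : ℤ}

lemma trapSum_mul_left (c : ℝ) (g : ℤ → ℝ) : trapSum N (fun n => c * g n) = c * trapSum N g := by
  simp only [trapSum, ← Finset.mul_sum]
  ring

lemma trapSum_neg (g : ℤ → ℝ) : trapSum N (fun n => -g n) = -trapSum N g := by
  simpa using trapSum_mul_left (N := N) (-1) g

lemma trapSum_congr (hN : 0 ≤ N) {f g : ℤ → ℝ} (h : ∀ n, 0 ≤ n → n ≤ N → f n = g n) :
    trapSum N f = trapSum N g := by
  rw [trapSum, trapSum, h 0 le_rfl hN, h N hN le_rfl,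
    Finset.sum_congr rfl fun n hn => h n (by grind) (by grind)]

lemma trapSum_add_comp_sub_one (hN : 0 < N) {a : ℤ → ℝ} (h₀ : a (-1) = a 0)
    (h_N : a N = a (N - 1)) :
    trapSum N (fun n => a n + a (n - 1)) = 2 * ∑ n ∈ Finset.Ico 0 N, a n := by
  have htel := sum_Ico_sub_pred a (show 1 ≤ N by omega)
  rw [sub_self, Finset.sum_sub_distrib] at htel
  rw [trapSum, sum_Ico_eq_add_sum_Ico_add_one a hN, zero_add, Finset.sum_add_distrib, zero_sub]
  linear_combination (-1 : ℝ) * htel + h₀ / 2 + h_N / 2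

lemma trapSum_dxm (Δx : ℝ) (hN : 0 < N) (G : ℤ → ℝ) :
    trapSum N (dxm Δx G) = (G N + G (N - 1) - G 0 - G (-1)) / (2 * Δx) := by
  rw [trapSum, sum_Ico_dxm Δx G (show 1 ≤ N by omega), sub_self]
  simp only [dxm, zero_sub]
  ring

/-- Summation by parts; reflecting `w` at `N` turns the boundary term into the half-weighted
last term of the trapezoidal sum. -/
lemma sum_dxp_mul_dxp (Δx : ℝ) (hN : 0 < N) {v w : ℤ → ℝ} (hv : v 0 = 0)
    (hw : w (N + 1) = w (N - 1)) :
    ∑ n ∈ Finset.Ico 0 N, dxp Δx v n * dxp Δx w n = -trapSum N (fun n => v n * d2x Δx w n) := by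
  have hparts (n : ℤ) : dxp Δx v n * dxp Δx w n
      = dxm Δx (fun m => v (m + 1) * dxp Δx w m) n - v n * d2x Δx w n :=
    eq_sub_of_add_eq (dxp_mul_dxp_add_mul_d2x Δx v w n)
  rw [Finset.sum_congr rfl fun n _ => hparts n, Finset.sum_sub_distrib, sum_Ico_dxm Δx _ hN.le,
    sum_Ico_eq_add_sum_Ico_add_one _ hN, trapSum]
  simp only [dxp, d2x, zero_add, zero_sub, neg_add_cancel, sub_add_cancel, hv, hw]
  ring

lemma H1d_eq_sum_sq (Δx : ℝ) (hN : 0 < N) {f : ℤ → ℝ} (h₀ : f (-1) = f 1)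
    (h_N : f (N + 1) = f (N - 1)) :
    H1d Δx N f = Δx / 2 * ∑ n ∈ Finset.Ico 0 N, dxp Δx f n ^ 2 := by
  have hH : H1d Δx N f
      = trapSum N (fun n => Δx / 4 * (dxp Δx f n ^ 2 + dxp Δx f (n - 1) ^ 2)) := by
    simp only [H1d, dxm_eq_dxp_sub_one]
    congr 1
    ext n
    ring
  rw [hH, trapSum_mul_left, trapSum_add_comp_sub_one hN (a := fun n => dxp Δx f n ^ 2)]
  · ring
  · simp only [dxp, h₀, neg_add_cancel, zero_add]
    ring
  · simp only [dxp, h_N, sub_add_cancel]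
    ring

lemma H1d_sub_H1d (Δx : ℝ) {Δt : ℝ} (hΔt : Δt ≠ 0) (hN : 0 < N) {u U : ℤ → ℝ}
    (hu₀ : u (-1) = u 1) (hu_N : u (N + 1) = u (N - 1))
    (hU₀ : U (-1) = U 1) (hU_N : U (N + 1) = U (N - 1)) :
    H1d Δx N U - H1d Δx N u = Δx * Δt * ∑ n ∈ Finset.Ico 0 N,
      dxp Δx (fun m => (u m + U m) / 2) n * dxp Δx (fun m => (U m - u m) / Δt) n := by
  rw [H1d_eq_sum_sq Δx hN hU₀ hU_N, H1d_eq_sum_sq Δx hN hu₀ hu_N, ← mul_sub,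
    ← Finset.sum_sub_distrib, Finset.mul_sum, Finset.mul_sum]
  refine Finset.sum_congr rfl fun n _ => ?_
  simp only [dxp]
  field_simp
  ring

end TrapezoidalSum

theorem stmt_17_general (N : ℤ) (hN : 4 ≤ N) (Δx Δt : ℝ) (hΔt : 0 < Δt)
    (u U : ℤ → ℝ)
    (hbu0 : u 0 = 0) (hbu1 : u (-1) = u 1)
    (hbu2 : u (N + 1) = u (N - 1)) (hbu3 : u (N + 2) = 2 * u N - u (N - 2))
    (hbU0 : U 0 = 0) (hbU1 : U (-1) = U 1)
    (hbU2 : U (N + 1) = U (N - 1)) (hbU3 : U (N + 2) = 2 * U N - U (N - 2))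
    (hscheme : ∀ n : ℤ, 1 ≤ n → n ≤ N →
      d2x Δx (fun m => (U m - u m) / Δt) n
        = -(d2x Δx (fun m => (u m + U m) / 2) n)
            * dxc Δx (fun m => (u m + U m) / 2) n
          - dxc Δx
              (fun m => ((u m + U m) / 2) * d2x Δx (fun k => (u k + U k) / 2) m) n) :
    H1d Δx N U = H1d Δx N u := by
  set v : ℤ → ℝ := fun m => (u m + U m) / 2
  set w : ℤ → ℝ := fun m => (U m - u m) / Δt
  set G := crossAvg v fun m => v m * d2x Δx v m
  have hN0 : (0 : ℤ) < N := by omega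
  have hv0 : v 0 = 0 := by simp [v, hbu0, hbU0]
  have hwN : w (N + 1) = w (N - 1) := by simp only [w, hbu2, hbU2]
  have hG_left : G 0 = 0 ∧ G (-1) = 0 := by simp [G, crossAvg, hv0]
  have hG_right : G N + G (N - 1) = 0 :=
    crossAvg_add_crossAvg_sub_one_eq_zero Δx (by simp only [v, hbu2, hbU2])
      (by simp only [v, hbu3, hbU3]; ring)
  have hsummand : ∀ n, 0 ≤ n → n ≤ N → v n * d2x Δx w n = -dxm Δx G n := by
    intro n hn0 hnN
    rcases hn0.eq_or_lt with rfl | hn1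
    · simp [dxm, hv0, hG_left]
    · exact mul_d2x_eq_neg_dxm_crossAvg Δx (hscheme n hn1 hnN)
  rw [← sub_eq_zero, H1d_sub_H1d Δx hΔt.ne' hN0 hbu1 hbu2 hbU1 hbU2,
    sum_dxp_mul_dxp Δx hN0 hv0 hwN, trapSum_congr hN0.le hsummand, trapSum_neg, trapSum_dxm Δx hN0, hG_right, hG_left.1, hG_left.2]
  ring

/-- The fully discrete `H₁`-preserving scheme for the Hunter–Saxton equation on
`[−L,L]` conserves the discrete Hamiltonian `H_{1,d}` from one time level (`u`) to the
next (`U`). -/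
theorem stmt_17 (N : ℤ) (hN : 4 ≤ N) (Δx Δt : ℝ) (hΔx : 0 < Δx) (hΔt : 0 < Δt)
    (u U : ℤ → ℝ)
    (hbu0 : u 0 = 0) (hbu1 : u (-1) = u 1)
    (hbu2 : u (N + 1) = u (N - 1)) (hbu3 : u (N + 2) = 2 * u N - u (N - 2))
    (hbU0 : U 0 = 0) (hbU1 : U (-1) = U 1)
    (hbU2 : U (N + 1) = U (N - 1)) (hbU3 : U (N + 2) = 2 * U N - U (N - 2))
    (hscheme : ∀ n : ℤ, 1 ≤ n → n ≤ N →
      d2x Δx (fun m => (U m - u m) / Δt) n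
        = -(d2x Δx (fun m => (u m + U m) / 2) n)
            * dxc Δx (fun m => (u m + U m) / 2) n
          - dxc Δx
              (fun m => ((u m + U m) / 2) * d2x Δx (fun k => (u k + U k) / 2) m) n) :
    H1d Δx N U = H1d Δx N u :=
  stmt_17_general N hN Δx Δt hΔt u U hbu0 hbu1 hbu2 hbu3 hbU0 hbU1 hbU2 hbU3 hscheme
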